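/- arXiv:0905.0044 — 5 statements merged into one kernel-verified Lean document; each statement's English description precedes it below -/
import Mathlib

section
/- If X ∈ ℂ^{m×n} has rank(X) ≤ r and Ψ is a set of at most r rank-one matrices, then ‖P_Ψ A* A X‖_F ≤ (1 + δ_r(A)) ‖X‖_F. -/
open scoped BigOperators Matrix

/-- Frobenius (trace) inner product on complex matrices: `⟪X, Y⟫ = tr(Yᴴ X)`. -/
noncomputable def frobInner {m n : ℕ} (X Y : Matrix (Fin m) (Fin n) ℂ) : ℂ :=
  (Yᴴ * X).trace

/-- Frobenius norm of a complex matrix. -/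
noncomputable def frobNorm {m n : ℕ} (X : Matrix (Fin m) (Fin n) ℂ) : ℝ :=
  Real.sqrt (∑ i, ∑ j, ‖X i j‖ ^ 2)

/-- Euclidean norm on `ℂ^p`. -/
noncomputable def eNorm {p : ℕ} (v : Fin p → ℂ) : ℝ :=
  Real.sqrt (∑ k, ‖v k‖ ^ 2)

/-- Hermitian inner product on `ℂ^p` (linear in the first argument). -/
noncomputable def eInner {p : ℕ} (u v : Fin p → ℂ) : ℂ :=
  ∑ k, (starRingEnd ℂ) (v k) * u k

/-- `A` satisfies the rank-`r` restricted isometry inequalities with constant `δ`: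
`(1-δ)‖X‖_F² ≤ ‖A X‖₂² ≤ (1+δ)‖X‖_F²` for all `X` with `rank X ≤ r`. -/
def RIPwith {m n p : ℕ} (A : Matrix (Fin m) (Fin n) ℂ →ₗ[ℂ] (Fin p → ℂ)) (r : ℕ) (δ : ℝ) : Prop :=
  ∀ X : Matrix (Fin m) (Fin n) ℂ, X.rank ≤ r →
    (1 - δ) * frobNorm X ^ 2 ≤ eNorm (A X) ^ 2 ∧ eNorm (A X) ^ 2 ≤ (1 + δ) * frobNorm X ^ 2

/-- `P` is the orthogonal projection onto the span of `S`
with respect to the Frobenius inner product. -/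
def IsOrthProjOn {m n : ℕ} (P : Matrix (Fin m) (Fin n) ℂ →ₗ[ℂ] Matrix (Fin m) (Fin n) ℂ)
    (S : Set (Matrix (Fin m) (Fin n) ℂ)) : Prop :=
  (∀ X, P (P X) = P X) ∧ LinearMap.range P = Submodule.span ℂ S ∧
    (∀ X Y, frobInner (P X) Y = frobInner X (P Y))

/-- `B` is the adjoint of `A` w.r.t. the Frobenius and Euclidean inner products. -/
def IsAdjoint {m n p : ℕ} (A : Matrix (Fin m) (Fin n) ℂ →ₗ[ℂ] (Fin p → ℂ))
    (B : (Fin p → ℂ) →ₗ[ℂ] Matrix (Fin m) (Fin n) ℂ) : Prop :=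
  ∀ X v, eInner (A X) v = frobInner X (B v)

/-!
Write `Y = P_Ψ A* A X`. As `Y` lies in the span of at most `r` rank-one matrices, `rank Y ≤ r`, so
the RIP upper bound applies to `Y` as well as to `X`. Since `P_Ψ` is an orthogonal projection,
`‖Y‖_F² = ⟨A* A X, Y⟩ = ⟨A X, A Y⟩ ≤ ‖A X‖₂ ‖A Y‖₂ ≤ (1 + δ) ‖X‖_F ‖Y‖_F`, and dividing by `‖Y‖_F`
gives the claim.
-/

open Matrix

namespace Matrix

variable {K m n : Type*} [Field K] [Fintype n]

theorem rank_add_le (A B : Matrix m n K) : (A + B).rank ≤ A.rank + B.rank := by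
  have h : LinearMap.range (A + B).mulVecLin ≤
      LinearMap.range A.mulVecLin ⊔ LinearMap.range B.mulVecLin := by
    rintro x ⟨v, rfl⟩
    rw [mulVecLin_add]
    exact Submodule.add_mem_sup ⟨v, rfl⟩ ⟨v, rfl⟩
  exact (Submodule.finrank_mono h).trans (Submodule.finrank_add_le_finrank_add_finrank _ _)

theorem rank_smul_le (c : K) (A : Matrix m n K) : (c • A).rank ≤ A.rank := by
  refine Submodule.finrank_mono ?_
  rintro x ⟨v, rfl⟩
  exact ⟨c • v, by simp⟩

theorem rank_sum_le {ι : Type*} (s : Finset ι) (f : ι → Matrix m n K) :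
    (∑ i ∈ s, f i).rank ≤ ∑ i ∈ s, (f i).rank :=
  Finset.sum_hom_rel (r := fun (A : Matrix m n K) k => A.rank ≤ k) (by simp [rank_zero])
    fun _ _ _ h => (rank_add_le _ _).trans (by gcongr)

theorem rank_le_card_of_mem_span {S : Finset (Matrix m n K)} (hS : ∀ ψ ∈ S, ψ.rank ≤ 1)
    {Y : Matrix m n K} (hY : Y ∈ Submodule.span K (S : Set (Matrix m n K))) : Y.rank ≤ S.card := by
  obtain ⟨c, -, rfl⟩ := Submodule.mem_span_finset.mp hY
  calc (∑ ψ ∈ S, c ψ • ψ).rank ≤ ∑ ψ ∈ S, (c ψ • ψ).rank := rank_sum_le _ _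
    _ ≤ ∑ _ψ ∈ S, 1 := Finset.sum_le_sum fun ψ hψ => (rank_smul_le _ _).trans (hS ψ hψ)
    _ = S.card := by simp

end Matrix

section Frobenius

variable {m n : ℕ}

lemma frobNorm_nonneg (X : Matrix (Fin m) (Fin n) ℂ) : 0 ≤ frobNorm X :=
  Real.sqrt_nonneg _

lemma frobInner_self (X : Matrix (Fin m) (Fin n) ℂ) : frobInner X X = ((frobNorm X ^ 2 : ℝ) : ℂ) := by
  rw [frobNorm, Real.sq_sqrt (by positivity)]
  simp only [frobInner, trace, diag_apply, mul_apply, conjTranspose_apply]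
  rw [Finset.sum_comm]
  push_cast
  refine Finset.sum_congr rfl fun i _ => Finset.sum_congr rfl fun j _ => ?_
  rw [mul_comm, RCLike.star_def, Complex.mul_conj']

lemma frobInner_conj_symm (X Y : Matrix (Fin m) (Fin n) ℂ) :
    starRingEnd ℂ (frobInner Y X) = frobInner X Y := by
  rw [frobInner, frobInner, ← RCLike.star_def, ← trace_conjTranspose, conjTranspose_mul,
    conjTranspose_conjTranspose]

lemma IsOrthProjOn.frobNorm_sq_eq {P : Matrix (Fin m) (Fin n) ℂ →ₗ[ℂ] Matrix (Fin m) (Fin n) ℂ}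
    {S : Set (Matrix (Fin m) (Fin n) ℂ)} (hP : IsOrthProjOn P S) (Z : Matrix (Fin m) (Fin n) ℂ) :
    frobNorm (P Z) ^ 2 = ‖frobInner (P Z) Z‖ := by
  have hself : frobInner (P Z) (P Z) = starRingEnd ℂ (frobInner (P Z) Z) := by
    rw [hP.2.2, hP.1, frobInner_conj_symm]
  rw [← RCLike.norm_conj, ← hself, frobInner_self, Complex.norm_real,
    Real.norm_of_nonneg (by positivity)]

end Frobenius

lemma eNorm_nonneg {p : ℕ} (v : Fin p → ℂ) : 0 ≤ eNorm v :=
  Real.sqrt_nonneg _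

lemma norm_eInner_le {p : ℕ} (u v : Fin p → ℂ) : ‖eInner u v‖ ≤ eNorm u * eNorm v := by
  have hinner : eInner u v = inner ℂ (WithLp.toLp 2 v) (WithLp.toLp 2 u) := by
    simp only [eInner, PiLp.inner_apply, RCLike.inner_apply]
    exact Finset.sum_congr rfl fun _ _ => mul_comm _ _
  rw [hinner, mul_comm, eNorm, eNorm, ← EuclideanSpace.norm_eq, ← EuclideanSpace.norm_eq]
  exact norm_inner_le_norm _ _

lemma IsOrthProjOn.frobNorm_sq_apply_adjoint_le {m n p : ℕ}
    {A : Matrix (Fin m) (Fin n) ℂ →ₗ[ℂ] (Fin p → ℂ)} {Astar : (Fin p → ℂ) →ₗ[ℂ] Matrix (Fin m) (Fin n) ℂ}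
    (hadj : IsAdjoint A Astar) {P : Matrix (Fin m) (Fin n) ℂ →ₗ[ℂ] Matrix (Fin m) (Fin n) ℂ}
    {S : Set (Matrix (Fin m) (Fin n) ℂ)} (hP : IsOrthProjOn P S) (v : Fin p → ℂ) :
    frobNorm (P (Astar v)) ^ 2 ≤ eNorm (A (P (Astar v))) * eNorm v := by
  rw [hP.frobNorm_sq_eq, ← hadj]
  exact norm_eInner_le _ _

lemma le_mul_of_sq_le_mul_of_sq_le {a b c x y : ℝ} (hx : 0 ≤ x) (hy : 0 ≤ y) (ha : 0 ≤ a)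
    (hb : 0 ≤ b) (h : y ^ 2 ≤ a * b) (ha' : a ^ 2 ≤ c * y ^ 2) (hb' : b ^ 2 ≤ c * x ^ 2) :
    y ≤ c * x := by
  rcases hy.eq_or_lt with rfl | hy
  · rcases hx.eq_or_lt with rfl | hx
    · simp
    · nlinarith
  have hc : 0 ≤ c := nonneg_of_mul_nonneg_left ((sq_nonneg a).trans ha') (by positivity)
  have hab : a * b ≤ c * x * y := by
    refine (pow_le_pow_iff_left₀ (by positivity) (by positivity) two_ne_zero).mp ?_
    calc (a * b) ^ 2 = a ^ 2 * b ^ 2 := by ring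
      _ ≤ c * y ^ 2 * (c * x ^ 2) := by gcongr
      _ = (c * x * y) ^ 2 := by ring
  nlinarith

theorem proj_adjoint_comp_bound_general {m n p r : ℕ} (A : Matrix (Fin m) (Fin n) ℂ →ₗ[ℂ] (Fin p → ℂ))
    (δ : ℝ) (hA : RIPwith A r δ)
    (Astar : (Fin p → ℂ) →ₗ[ℂ] Matrix (Fin m) (Fin n) ℂ) (hadj : IsAdjoint A Astar)
    (Ψ : Finset (Matrix (Fin m) (Fin n) ℂ)) (hΨ : ∀ ψ ∈ Ψ, ψ.rank = 1) (hcard : Ψ.card ≤ r)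
    (P : Matrix (Fin m) (Fin n) ℂ →ₗ[ℂ] Matrix (Fin m) (Fin n) ℂ)
    (hP : IsOrthProjOn P (Ψ : Set (Matrix (Fin m) (Fin n) ℂ)))
    (X : Matrix (Fin m) (Fin n) ℂ) (hX : X.rank ≤ r) :
    frobNorm (P (Astar (A X))) ≤ (1 + δ) * frobNorm X := by
  have hY : (P (Astar (A X))).rank ≤ r := by
    refine (rank_le_card_of_mem_span (fun ψ hψ => (hΨ ψ hψ).le) ?_).trans hcard
    exact hP.2.1 ▸ LinearMap.mem_range_self P _
  exact le_mul_of_sq_le_mul_of_sq_le (frobNorm_nonneg X) (frobNorm_nonneg _) (eNorm_nonneg _)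
    (eNorm_nonneg _) (hP.frobNorm_sq_apply_adjoint_le hadj (A X)) (hA _ hY).2 (hA X hX).2

/-- `‖P_Ψ A* A X‖_F ≤ (1 + δ_r(A)) ‖X‖_F` for `rank X ≤ r`. -/
theorem proj_adjoint_comp_bound {m n p r : ℕ} (A : Matrix (Fin m) (Fin n) ℂ →ₗ[ℂ] (Fin p → ℂ))
    (δ : ℝ) (hδ0 : 0 ≤ δ) (hA : RIPwith A r δ)
    (Astar : (Fin p → ℂ) →ₗ[ℂ] Matrix (Fin m) (Fin n) ℂ) (hadj : IsAdjoint A Astar)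
    (Ψ : Finset (Matrix (Fin m) (Fin n) ℂ)) (hΨ : ∀ ψ ∈ Ψ, ψ.rank = 1) (hcard : Ψ.card ≤ r)
    (P : Matrix (Fin m) (Fin n) ℂ →ₗ[ℂ] Matrix (Fin m) (Fin n) ℂ)
    (hP : IsOrthProjOn P (Ψ : Set (Matrix (Fin m) (Fin n) ℂ)))
    (X : Matrix (Fin m) (Fin n) ℂ) (hX : X.rank ≤ r) :
    frobNorm (P (Astar (A X))) ≤ (1 + δ) * frobNorm X :=
  proj_adjoint_comp_bound_general A δ hA Astar hadj Ψ hΨ hcard P hP X hX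
end

section
/- For X, Y real matrices with ⟨X,Y⟩ = 0 and rank(X + αY) ≤ r for all real α, the bound |⟨AX, AY⟩| ≤ δ_r(A)·‖X‖_F·‖Y‖_F holds (i.e., the constant √2 can be dropped in the real case). -/
open scoped BigOperators Matrix

/-- Trace inner product on real matrices: `⟪X, Y⟫ = tr(Yᵀ X)`. -/
noncomputable def frobInnerR {m n : ℕ} (X Y : Matrix (Fin m) (Fin n) ℝ) : ℝ :=
  (Yᵀ * X).trace

/-- Frobenius norm of a real matrix. -/
noncomputable def frobNormR {m n : ℕ} (X : Matrix (Fin m) (Fin n) ℝ) : ℝ :=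
  Real.sqrt (∑ i, ∑ j, (X i j) ^ 2)

/-- Euclidean norm on `ℝ^p`. -/
noncomputable def eNormR {p : ℕ} (v : Fin p → ℝ) : ℝ :=
  Real.sqrt (∑ k, (v k) ^ 2)

/-- Euclidean inner product on `ℝ^p`. -/
noncomputable def eInnerR {p : ℕ} (u v : Fin p → ℝ) : ℝ :=
  ∑ k, u k * v k

/-- `A` satisfies the rank-`r` restricted isometry inequalities with constant `δ` (real case). -/
def RIPwithR {m n p : ℕ} (A : Matrix (Fin m) (Fin n) ℝ →ₗ[ℝ] (Fin p → ℝ)) (r : ℕ) (δ : ℝ) : Prop :=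
  ∀ X : Matrix (Fin m) (Fin n) ℝ, X.rank ≤ r →
    (1 - δ) * frobNormR X ^ 2 ≤ eNormR (A X) ^ 2 ∧ eNormR (A X) ^ 2 ≤ (1 + δ) * frobNormR X ^ 2

/-!
Polarization turns the restricted isometry bounds on `X + Y` and `X - Y` into
`|⟨AX, AY⟩| ≤ δ (‖X‖² + ‖Y‖²) / 2` for orthogonal `X`, `Y` (orthogonality makes
`‖X ± Y‖² = ‖X‖² + ‖Y‖²`). Since `X + αY` has rank at most `r` for every `α`, `Y` may first be
rescaled to the norm of `X`, and the arithmetic mean becomes the geometric one `‖X‖ ‖Y‖`.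
-/

open scoped RealInnerProductSpace

section RestrictedIsometry

variable {E F : Type*} [NormedAddCommGroup E] [InnerProductSpace ℝ E]
  [NormedAddCommGroup F] [InnerProductSpace ℝ F]

def IsRestrictedIsometryOn (T : E →ₗ[ℝ] F) (S : Set E) (δ : ℝ) : Prop :=
  ∀ z ∈ S, (1 - δ) * ‖z‖ ^ 2 ≤ ‖T z‖ ^ 2 ∧ ‖T z‖ ^ 2 ≤ (1 + δ) * ‖z‖ ^ 2

namespace IsRestrictedIsometryOn

variable {T : E →ₗ[ℝ] F} {S : Set E} {δ : ℝ} {x y : E}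

theorem abs_inner_le_of_inner_eq_zero (hT : IsRestrictedIsometryOn T S δ) (hxy : ⟪x, y⟫ = 0)
    (hadd : x + y ∈ S) (hsub : x - y ∈ S) :
    |⟪T x, T y⟫| ≤ δ / 2 * (‖x‖ ^ 2 + ‖y‖ ^ 2) := by
  obtain ⟨hadd₁, hadd₂⟩ := hT _ hadd
  obtain ⟨hsub₁, hsub₂⟩ := hT _ hsub
  simp only [map_add, map_sub, norm_add_sq_real, norm_sub_sq_real, hxy] at hadd₁ hadd₂ hsub₁ hsub₂
  rw [abs_le]
  constructor <;> linarith

theorem abs_inner_le_mul_norm_mul_norm (hT : IsRestrictedIsometryOn T S δ) (hxy : ⟪x, y⟫ = 0)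
    (hS : ∀ α : ℝ, x + α • y ∈ S) :
    |⟪T x, T y⟫| ≤ δ * ‖x‖ * ‖y‖ := by
  rcases eq_or_ne x 0 with rfl | hx
  · simp
  rcases eq_or_ne y 0 with rfl | hy
  · simp
  set c := ‖x‖ / ‖y‖
  have hc : 0 < c := by positivity
  have hcy : c * ‖y‖ = ‖x‖ := div_mul_cancel₀ _ (norm_ne_zero_iff.mpr hy)
  have hsub : x - c • y ∈ S := by simpa [sub_eq_add_neg] using hS (-c)
  have h := hT.abs_inner_le_of_inner_eq_zero (by rw [inner_smul_right, hxy, mul_zero]) (hS c) hsub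
  rw [map_smul, inner_smul_right, abs_mul, abs_of_pos hc, norm_smul, Real.norm_of_nonneg hc.le,
    hcy] at h
  refine le_of_mul_le_mul_left ?_ hc
  calc c * |⟪T x, T y⟫| ≤ δ / 2 * (‖x‖ ^ 2 + ‖x‖ ^ 2) := h
    _ = c * (δ * ‖x‖ * ‖y‖) := by rw [← hcy]; ring

end IsRestrictedIsometryOn

end RestrictedIsometry

section Matrix

open WithLp

variable {m n p : ℕ}

noncomputable def matrixToL2 : Matrix (Fin m) (Fin n) ℝ ≃ₗ[ℝ] EuclideanSpace ℝ (Fin m × Fin n) :=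
  (Matrix.ofLinearEquiv ℝ).symm ≪≫ₗ (LinearEquiv.curry ℝ ℝ _ _).symm ≪≫ₗ
    (WithLp.linearEquiv 2 ℝ _).symm

@[simp]
theorem matrixToL2_apply (X : Matrix (Fin m) (Fin n) ℝ) (ij : Fin m × Fin n) :
    matrixToL2 X ij = X ij.1 ij.2 :=
  rfl

theorem frobNormR_eq_norm (X : Matrix (Fin m) (Fin n) ℝ) : frobNormR X = ‖matrixToL2 X‖ := by
  simp [frobNormR, EuclideanSpace.norm_eq, Fintype.sum_prod_type]

theorem frobInnerR_eq_inner (X Y : Matrix (Fin m) (Fin n) ℝ) :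
    frobInnerR X Y = ⟪matrixToL2 X, matrixToL2 Y⟫ := by
  simp [frobInnerR, Matrix.trace, Matrix.mul_apply, PiLp.inner_apply, Fintype.sum_prod_type,
    Finset.sum_comm (γ := Fin m), mul_comm]

theorem eNormR_eq_norm (v : Fin p → ℝ) : eNormR v = ‖toLp 2 v‖ := by
  simp [eNormR, EuclideanSpace.norm_eq]

theorem eInnerR_eq_inner (u v : Fin p → ℝ) : eInnerR u v = ⟪toLp 2 u, toLp 2 v⟫ := by
  simp [eInnerR, EuclideanSpace.inner_toLp_toLp, dotProduct, mul_comm]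

theorem RIPwithR.isRestrictedIsometryOn {A : Matrix (Fin m) (Fin n) ℝ →ₗ[ℝ] (Fin p → ℝ)} {r : ℕ}
    {δ : ℝ} (hA : RIPwithR A r δ) :
    IsRestrictedIsometryOn
      ((WithLp.linearEquiv 2 ℝ _).symm.toLinearMap ∘ₗ A ∘ₗ matrixToL2.symm.toLinearMap)
      {z | (matrixToL2.symm z).rank ≤ r} δ := by
  intro z hz
  have h := hA _ hz
  rwa [eNormR_eq_norm, frobNormR_eq_norm, LinearEquiv.apply_symm_apply] at h

end Matrix

theorem rank_restricted_orthogonality_real_general {m n p r : ℕ}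
    (A : Matrix (Fin m) (Fin n) ℝ →ₗ[ℝ] (Fin p → ℝ))
    (δ : ℝ) (hA : RIPwithR A r δ)
    (X Y : Matrix (Fin m) (Fin n) ℝ)
    (hXY : frobInnerR X Y = 0)
    (hrank : ∀ α : ℝ, (X + α • Y).rank ≤ r) :
    |eInnerR (A X) (A Y)| ≤ δ * frobNormR X * frobNormR Y := by
  have h := hA.isRestrictedIsometryOn.abs_inner_le_mul_norm_mul_norm
    (x := matrixToL2 X) (y := matrixToL2 Y) (by rwa [← frobInnerR_eq_inner])
    (fun α => by simpa [← map_smul, ← map_add] using hrank α)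
  simpa [eInnerR_eq_inner, frobNormR_eq_norm] using h

/-- Real rank-restricted orthogonality property, without the `√2` factor:
if `⟪X,Y⟫ = 0` and `rank (X + α • Y) ≤ r` for all real `α`, then
`|⟨A X, A Y⟩| ≤ δ_r(A) ‖X‖_F ‖Y‖_F`. -/
theorem rank_restricted_orthogonality_real {m n p r : ℕ}
    (A : Matrix (Fin m) (Fin n) ℝ →ₗ[ℝ] (Fin p → ℝ))
    (δ : ℝ) (hδ0 : 0 ≤ δ) (hA : RIPwithR A r δ)
    (X Y : Matrix (Fin m) (Fin n) ℝ)
    (hXY : frobInnerR X Y = 0)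
    (hrank : ∀ α : ℝ, (X + α • Y).rank ≤ r) :
    |eInnerR (A X) (A Y)| ≤ δ * frobNormR X * frobNormR Y :=
  rank_restricted_orthogonality_real_general A δ hA X Y hXY hrank
end

section
/- If a linear map A : ℂ^{m×n} → ℂ^p satisfies ‖AX‖₂² ≤ (1 + δ)‖X‖_F² for all X with rank(X) ≤ r, then for every matrix X ∈ ℂ^{m×n} (of arbitrary rank), ‖AX‖₂ ≤ √(1+δ) · ( ‖X‖_F + ‖X‖_*/√r ), where ‖X‖_* is the nuclear norm (sum of singular values) of X. -/
open scoped BigOperators Matrix ComplexOrder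

/-- The singular values of a complex matrix (as square roots of the eigenvalues of `Xᴴ X`). -/
noncomputable def singVals {m n : ℕ} (X : Matrix (Fin m) (Fin n) ℂ) : Fin n → ℝ :=
  fun i => Real.sqrt ((Matrix.posSemidef_conjTranspose_mul_self X).1.eigenvalues i)

/-- The nuclear norm: sum of all singular values. -/
noncomputable def nuclearNorm {m n : ℕ} (X : Matrix (Fin m) (Fin n) ℂ) : ℝ :=
  ∑ i, singVals X i

/-!
Diagonalize `Xᴴ X` and cut `X` along its right singular vectors: for a set `S` of indices,
`X * spectralProj X S` has rank at most `#S` and squared Frobenius norm `∑ i ∈ S, σᵢ²`.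
Peel off greedily the `r` largest remaining singular values. The first block has Frobenius
norm at most `‖X‖_F`; every later block has its singular values below the mean of the block
before it, so its Frobenius norm is at most `√r` times that mean, i.e. the previous block's
share of `‖X‖_*` divided by `√r`. The rank-`r` bound on each block and the triangle inequality
for `A` give the claim.
-/

theorem Finset.exists_subset_card_eq_forall_le {ι α : Type*} [DecidableEq ι] [LinearOrder α]
    (σ : ι → α) (S : Finset ι) {k : ℕ} (hk : k ≤ S.card) :
    ∃ T ⊆ S, T.card = k ∧ ∀ i ∈ T, ∀ j ∈ S \ T, σ j ≤ σ i := by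
  induction k with
  | zero => exact ⟨∅, S.empty_subset, rfl, by simp⟩
  | succ k ih =>
    obtain ⟨T, hTS, hTcard, hT⟩ := ih (Nat.le_of_succ_le hk)
    have hrest : (S \ T).Nonempty := by
      rw [← Finset.card_pos, Finset.card_sdiff_of_subset hTS]; omega
    obtain ⟨a, ha, ha_max⟩ := (S \ T).exists_max_image σ hrest
    rw [Finset.mem_sdiff] at ha
    refine ⟨insert a T, Finset.insert_subset ha.1 hTS,
      by rw [Finset.card_insert_of_notMem ha.2, hTcard], fun i hi j hj => ?_⟩
    have hj' : j ∈ S \ T := by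
      simp only [Finset.mem_sdiff, Finset.mem_insert, not_or] at hj ⊢
      exact ⟨hj.1, hj.2.2⟩
    rcases Finset.mem_insert.mp hi with rfl | hi
    exacts [ha_max j hj', hT i hi j hj']

theorem Finset.exists_subset_card_eq_forall_le_sum_div {ι : Type*} [DecidableEq ι] (σ : ι → ℝ)
    (S : Finset ι) {r : ℕ} (hr : 0 < r) (hrS : r ≤ S.card) :
    ∃ T ⊆ S, T.card = r ∧ ∀ j ∈ S \ T, σ j ≤ (∑ i ∈ T, σ i) / r := by
  obtain ⟨T, hTS, hTcard, hT⟩ := S.exists_subset_card_eq_forall_le σ hrS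
  refine ⟨T, hTS, hTcard, fun j hj => ?_⟩
  rw [le_div_iff₀ (by exact_mod_cast hr), mul_comm, ← nsmul_eq_mul, ← hTcard]
  exact Finset.card_nsmul_le_sum T σ (σ j) fun i hi => hT i hi j hj

theorem Real.sqrt_mul_div_self_eq_div_sqrt (x y : ℝ) : √x * (y / x) = y / √x := by
  rcases le_or_gt x 0 with hx | hx
  · simp [Real.sqrt_eq_zero'.mpr hx]
  · field_simp
    rw [Real.sq_sqrt hx.le, mul_comm]

theorem Real.sqrt_sum_sq_le_sqrt_mul {ι : Type*} {σ : ι → ℝ} {S : Finset ι} {r : ℕ} {c : ℝ}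
    (hc : 0 ≤ c) (hσ : ∀ i ∈ S, 0 ≤ σ i) (hσc : ∀ i ∈ S, σ i ≤ c) (hS : S.card ≤ r) :
    √(∑ i ∈ S, σ i ^ 2) ≤ √r * c := by
  calc √(∑ i ∈ S, σ i ^ 2) ≤ √(r * c ^ 2) := by
        gcongr
        calc ∑ i ∈ S, σ i ^ 2 ≤ S.card • c ^ 2 :=
              Finset.sum_le_card_nsmul _ _ _ fun i hi => pow_le_pow_left₀ (hσ i hi) (hσc i hi) 2
          _ ≤ r * c ^ 2 := by rw [nsmul_eq_mul]; gcongr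
    _ = √r * c := by rw [Real.sqrt_mul (Nat.cast_nonneg r), Real.sqrt_sq hc]

section SplittingBound

variable {ι : Type*} [DecidableEq ι] {N : Finset ι → ℝ} {σ : ι → ℝ} {K : ℝ} {r : ℕ}

theorem le_sqrt_mul_add_sum_div_sqrt (hr : 0 < r) (hσ : ∀ i, 0 ≤ σ i) (hK : 0 ≤ K)
    (hsplit : ∀ S T, T ⊆ S → N S ≤ N T + N (S \ T))
    (hsmall : ∀ S, S.card ≤ r → N S ≤ K * √(∑ i ∈ S, σ i ^ 2))
    (S : Finset ι) {c : ℝ} (hc : 0 ≤ c) (hσc : ∀ i ∈ S, σ i ≤ c) :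
    N S ≤ K * (√r * c + (∑ i ∈ S, σ i) / √r) := by
  induction S using Finset.strongInduction generalizing c with | H S ih =>
  by_cases hS : S.card ≤ r
  · calc N S ≤ K * √(∑ i ∈ S, σ i ^ 2) := hsmall S hS
      _ ≤ K * (√r * c) := by
          gcongr; exact Real.sqrt_sum_sq_le_sqrt_mul hc (fun i _ => hσ i) hσc hS
      _ ≤ K * (√r * c + (∑ i ∈ S, σ i) / √r) := by
          have : 0 ≤ ∑ i ∈ S, σ i := Finset.sum_nonneg fun i _ => hσ i
          gcongr; exact le_add_of_nonneg_right (by positivity)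
  obtain ⟨T, hTS, hTcard, hT⟩ := S.exists_subset_card_eq_forall_le_sum_div σ hr (by omega)
  have hT_ne : T.Nonempty := Finset.card_pos.mp (hTcard ▸ hr)
  have hrest := ih (S \ T) (Finset.sdiff_ssubset hTS hT_ne)
    (div_nonneg (Finset.sum_nonneg fun i _ => hσ i) r.cast_nonneg) hT
  have hfirst : N T ≤ K * (√r * c) := by
    refine (hsmall T hTcard.le).trans ?_
    gcongr
    exact Real.sqrt_sum_sq_le_sqrt_mul hc (fun i _ => hσ i) (fun i hi => hσc i (hTS hi)) hTcard.le
  calc N S ≤ N T + N (S \ T) := hsplit S T hTS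
    _ ≤ K * (√r * c) + K * (√r * ((∑ i ∈ T, σ i) / r) + (∑ i ∈ S \ T, σ i) / √r) :=
        add_le_add hfirst hrest
    _ = K * (√r * c + (∑ i ∈ S, σ i) / √r) := by
        rw [Real.sqrt_mul_div_self_eq_div_sqrt, ← Finset.sum_sdiff hTS (f := σ)]
        ring

theorem le_sqrt_sum_sq_add_sum_div_sqrt (hr : 0 < r) (hσ : ∀ i, 0 ≤ σ i) (hK : 0 ≤ K)
    (hsplit : ∀ S T, T ⊆ S → N S ≤ N T + N (S \ T))
    (hsmall : ∀ S, S.card ≤ r → N S ≤ K * √(∑ i ∈ S, σ i ^ 2)) (S : Finset ι) :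
    N S ≤ K * (√(∑ i ∈ S, σ i ^ 2) + (∑ i ∈ S, σ i) / √r) := by
  have hsum : ∀ S : Finset ι, 0 ≤ ∑ i ∈ S, σ i := fun S => Finset.sum_nonneg fun i _ => hσ i
  by_cases hS : S.card ≤ r
  · refine (hsmall S hS).trans ?_
    have := hsum S
    gcongr; exact le_add_of_nonneg_right (by positivity)
  obtain ⟨T, hTS, hTcard, hT⟩ := S.exists_subset_card_eq_forall_le_sum_div σ hr (by omega)
  have hfirst : N T ≤ K * √(∑ i ∈ S, σ i ^ 2) := by
    refine (hsmall T hTcard.le).trans ?_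
    gcongr
  have hrest := le_sqrt_mul_add_sum_div_sqrt hr hσ hK hsplit hsmall (S \ T)
    (div_nonneg (hsum T) r.cast_nonneg) hT
  calc N S ≤ N T + N (S \ T) := hsplit S T hTS
    _ ≤ K * √(∑ i ∈ S, σ i ^ 2) + K * (√r * ((∑ i ∈ T, σ i) / r) + (∑ i ∈ S \ T, σ i) / √r) :=
        add_le_add hfirst hrest
    _ = K * (√(∑ i ∈ S, σ i ^ 2) + (∑ i ∈ S, σ i) / √r) := by
        rw [Real.sqrt_mul_div_self_eq_div_sqrt, ← Finset.sum_sdiff hTS (f := σ)]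
        ring

end SplittingBound

open Matrix

theorem eNorm_add_le {p : ℕ} (u v : Fin p → ℂ) : eNorm (u + v) ≤ eNorm u + eNorm v := by
  have h (w : Fin p → ℂ) : eNorm w = ‖WithLp.toLp 2 w‖ := by simp [eNorm, EuclideanSpace.norm_eq]
  rw [h, h, h, WithLp.toLp_add]
  exact norm_add_le _ _

theorem frobNorm_eq_sqrt_re_trace {m n : ℕ} (Y : Matrix (Fin m) (Fin n) ℂ) :
    frobNorm Y = √(Yᴴ * Y).trace.re := by
  rw [frobNorm, Finset.sum_comm]
  simp [trace, mul_apply, Complex.re_sum, ← Complex.normSq_eq_norm_sq, Complex.normSq_apply]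

theorem trace_conjStarAlgAut {n : ℕ} (U : unitary (Matrix (Fin n) (Fin n) ℂ))
    (M : Matrix (Fin n) (Fin n) ℂ) : (Unitary.conjStarAlgAut ℂ _ U M).trace = M.trace := by
  rw [Unitary.conjStarAlgAut_apply, trace_mul_cycle, Unitary.coe_star_mul_self, one_mul]

section SpectralProj

variable {m n : ℕ} (X : Matrix (Fin m) (Fin n) ℂ)

/-- The orthogonal projection onto the right singular vectors of `X` indexed by `S`, so that
`X * spectralProj X S` is the part of the singular value decomposition of `X` supported on `S`. -/
noncomputable def spectralProj (S : Finset (Fin n)) : Matrix (Fin n) (Fin n) ℂ :=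
  Unitary.conjStarAlgAut ℂ _ (posSemidef_conjTranspose_mul_self X).1.eigenvectorUnitary
    (diagonal fun i => if i ∈ S then 1 else 0)

theorem singVals_nonneg (i : Fin n) : 0 ≤ singVals X i := Real.sqrt_nonneg _

theorem singVals_sq (i : Fin n) :
    singVals X i ^ 2 = (posSemidef_conjTranspose_mul_self X).1.eigenvalues i :=
  Real.sq_sqrt ((posSemidef_conjTranspose_mul_self X).eigenvalues_nonneg i)

theorem spectralProj_univ : spectralProj X Finset.univ = 1 := by
  simp [spectralProj]

theorem spectralProj_eq_add_sdiff {S T : Finset (Fin n)} (hTS : T ⊆ S) :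
    spectralProj X S = spectralProj X T + spectralProj X (S \ T) := by
  rw [spectralProj, spectralProj, spectralProj, ← map_add, diagonal_add]
  congr 2
  ext i
  by_cases hi : i ∈ T
  · simp [hi, hTS hi]
  · simp [hi]

theorem rank_spectralProj_le (S : Finset (Fin n)) : (spectralProj X S).rank ≤ S.card := by
  classical
  refine (rank_mul_le_left _ _).trans ((rank_mul_le_right _ _).trans ?_)
  rw [rank_diagonal]
  simp

theorem frobNorm_mul_spectralProj (S : Finset (Fin n)) :
    frobNorm (X * spectralProj X S) = √(∑ i ∈ S, singVals X i ^ 2) := by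
  set hX := (posSemidef_conjTranspose_mul_self X).1
  have hP : (spectralProj X S)ᴴ = spectralProj X S := by
    rw [← star_eq_conjTranspose, spectralProj, ← map_star, star_eq_conjTranspose,
      diagonal_conjTranspose]
    congr 2
    ext i
    split_ifs <;> simp [*]
  have hgram : (X * spectralProj X S)ᴴ * (X * spectralProj X S) =
      Unitary.conjStarAlgAut ℂ _ hX.eigenvectorUnitary
        (diagonal fun i => if i ∈ S then (hX.eigenvalues i : ℂ) else 0) := by
    rw [conjTranspose_mul, hP, Matrix.mul_assoc, ← Matrix.mul_assoc Xᴴ]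
    conv_lhs => rw [hX.spectral_theorem]
    rw [spectralProj, ← map_mul, ← map_mul, diagonal_mul_diagonal, diagonal_mul_diagonal]
    congr 2
    ext i
    split_ifs <;> simp
  rw [frobNorm_eq_sqrt_re_trace, hgram, trace_conjStarAlgAut, trace_diagonal]
  simp [Complex.re_sum, singVals_sq]

end SpectralProj

theorem Real.le_sqrt_mul_of_sq_le_mul_sq {a b c : ℝ} (hb : 0 ≤ b) (h : a ^ 2 ≤ c * b ^ 2) :
    a ≤ √c * b := by
  rw [← Real.sqrt_sq hb, ← Real.sqrt_mul' c (sq_nonneg b)]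
  exact (le_abs_self a).trans (Real.abs_le_sqrt h)

theorem energy_bound_general {m n p r : ℕ} (hr : 1 ≤ r)
    (A : Matrix (Fin m) (Fin n) ℂ →ₗ[ℂ] (Fin p → ℂ)) (δ : ℝ)
    (hA : ∀ X : Matrix (Fin m) (Fin n) ℂ, X.rank ≤ r →
      eNorm (A X) ^ 2 ≤ (1 + δ) * frobNorm X ^ 2) :
    ∀ X : Matrix (Fin m) (Fin n) ℂ,
      eNorm (A X) ≤ Real.sqrt (1 + δ) * (frobNorm X + nuclearNorm X / Real.sqrt r) := by
  intro X
  have hsplit : ∀ S T : Finset (Fin n), T ⊆ S → eNorm (A (X * spectralProj X S)) ≤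
      eNorm (A (X * spectralProj X T)) + eNorm (A (X * spectralProj X (S \ T))) := by
    intro S T hTS
    rw [spectralProj_eq_add_sdiff X hTS, Matrix.mul_add, map_add]
    exact eNorm_add_le _ _
  have hsmall : ∀ S : Finset (Fin n), S.card ≤ r →
      eNorm (A (X * spectralProj X S)) ≤ √(1 + δ) * √(∑ i ∈ S, singVals X i ^ 2) := by
    intro S hS
    rw [← frobNorm_mul_spectralProj]
    exact Real.le_sqrt_mul_of_sq_le_mul_sq (Real.sqrt_nonneg _)
      (hA _ ((rank_mul_le_right _ _).trans ((rank_spectralProj_le X S).trans hS)))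
  have hfrob : frobNorm X = √(∑ i, singVals X i ^ 2) := by
    simpa [spectralProj_univ] using frobNorm_mul_spectralProj X Finset.univ
  rw [hfrob, nuclearNorm]
  simpa [spectralProj_univ] using le_sqrt_sum_sq_add_sum_div_sqrt hr (singVals_nonneg X)
    (Real.sqrt_nonneg _) hsplit hsmall Finset.univ

/-- If `‖A X‖₂² ≤ (1+δ)‖X‖_F²` for all rank-`≤ r` matrices, then for every matrix `X`,
`‖A X‖₂ ≤ √(1+δ) (‖X‖_F + ‖X‖_*/√r)`. -/
theorem energy_bound {m n p r : ℕ} (hr : 1 ≤ r)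
    (A : Matrix (Fin m) (Fin n) ℂ →ₗ[ℂ] (Fin p → ℂ)) (δ : ℝ) (hδ0 : 0 ≤ δ)
    (hA : ∀ X : Matrix (Fin m) (Fin n) ℂ, X.rank ≤ r →
      eNorm (A X) ^ 2 ≤ (1 + δ) * frobNorm X ^ 2) :
    ∀ X : Matrix (Fin m) (Fin n) ℂ,
      eNorm (A X) ≤ Real.sqrt (1 + δ) * (frobNorm X + nuclearNorm X / Real.sqrt r) :=
  energy_bound_general hr A δ hA
end

section
/- Let X be an m×n complex matrix with singular values σ₁ ≥ σ₂ ≥ … (set σ_k = 0 for k > rank(X)). Group the singular values into consecutive blocks of size r, writing X = Σ_{j=0}^J c_j Y_j where c_j is the Frobenius norm of the j-th block and Y_j is the corresponding unit-Frobenius-norm rank-≤r matrix. Then Σ_{j≥1} c_j ≤ ‖X‖_*/√r, where ‖X‖_* is the nuclear norm. -/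
open scoped BigOperators Matrix ComplexOrder

/-! Each singular value in block `j` is at most the first one of that block, which is at most
every singular value in block `j - 1`; hence `√r · c_j ≤ Σ_{block j-1} σ_k`, and summing over
`j ≥ 1` bounds `√r · Σ_{j≥1} c_j` by a partial sum of the singular values. -/

open Finset

section AntitoneBlocks

variable {σ : ℕ → ℝ}

theorem sqrt_sum_sq_Ico_le_of_antitone (hanti : Antitone σ) (hσ0 : ∀ k, 0 ≤ σ k) (a r : ℕ) :
    √(∑ k ∈ Ico a (a + r), σ k ^ 2) ≤ √r * σ a := by
  have hsq : ∑ k ∈ Ico a (a + r), σ k ^ 2 ≤ r * σ a ^ 2 := by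
    simpa using sum_le_card_nsmul (Ico a (a + r)) (σ · ^ 2) (σ a ^ 2) fun k hk =>
      pow_le_pow_left₀ (hσ0 k) (hanti (mem_Ico.mp hk).1) 2
  calc √(∑ k ∈ Ico a (a + r), σ k ^ 2) ≤ √(r * σ a ^ 2) := Real.sqrt_le_sqrt hsq
    _ = √r * σ a := by rw [Real.sqrt_mul (Nat.cast_nonneg r), Real.sqrt_sq (hσ0 a)]

theorem card_mul_le_sum_Ico_of_antitone (hanti : Antitone σ) (a r : ℕ) :
    r * σ (a + r) ≤ ∑ k ∈ Ico a (a + r), σ k := by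
  simpa using card_nsmul_le_sum (Ico a (a + r)) σ (σ (a + r)) fun k hk =>
    hanti (mem_Ico.mp hk).2.le

theorem sqrt_mul_sqrt_sum_sq_block_le (hanti : Antitone σ) (hσ0 : ∀ k, 0 ≤ σ k) (r j : ℕ) :
    √r * √(∑ k ∈ Ico (r * (j + 1)) (r * (j + 1 + 1)), σ k ^ 2) ≤
      ∑ k ∈ Ico (r * j) (r * (j + 1)), σ k := by
  simp only [mul_add_one]
  calc √r * √(∑ k ∈ Ico (r * j + r) (r * j + r + r), σ k ^ 2)
      ≤ √r * (√r * σ (r * j + r)) := by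
        gcongr; exact sqrt_sum_sq_Ico_le_of_antitone hanti hσ0 _ _
    _ = r * σ (r * j + r) := by rw [← mul_assoc, Real.mul_self_sqrt (Nat.cast_nonneg r)]
    _ ≤ ∑ k ∈ Ico (r * j) (r * j + r), σ k := card_mul_le_sum_Ico_of_antitone hanti _ _

theorem sqrt_mul_sum_sqrt_sum_sq_blocks_le (hanti : Antitone σ) (hσ0 : ∀ k, 0 ≤ σ k)
    (r J : ℕ) :
    √r * ∑ j ∈ Icc 1 J, √(∑ k ∈ Ico (r * j) (r * (j + 1)), σ k ^ 2) ≤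
      ∑ k ∈ range (r * J), σ k := by
  induction J with
  | zero => simp
  | succ J ih =>
    rw [sum_Icc_succ_top (by omega), mul_add,
      ← sum_range_add_sum_Ico _ (Nat.mul_le_mul_left r J.le_succ)]
    exact add_le_add ih (sqrt_mul_sqrt_sum_sq_block_le hanti hσ0 r J)

theorem sum_range_le_sum_range_of_eq_zero {n : ℕ} (hσ0 : ∀ k, 0 ≤ σ k)
    (hzero : ∀ k, n ≤ k → σ k = 0) (N : ℕ) :
    ∑ k ∈ range N, σ k ≤ ∑ k ∈ range n, σ k :=
  calc ∑ k ∈ range N, σ k ≤ ∑ k ∈ range (max N n), σ k :=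
        sum_le_sum_of_subset_of_nonneg (range_subset_range.mpr (le_max_left N n))
          fun k _ _ => hσ0 k
    _ = ∑ k ∈ range n, σ k :=
        (sum_subset (range_subset_range.mpr (le_max_right N n)) fun k _ hk =>
          hzero k (by simpa using hk)).symm

end AntitoneBlocks

theorem nuclearNorm_eq_sum_range {m n : ℕ} (X : Matrix (Fin m) (Fin n) ℂ) {σ : ℕ → ℝ}
    (hσ : ∃ e : Equiv.Perm (Fin n), ∀ i : Fin n, σ (i : ℕ) = singVals X (e i)) :
    nuclearNorm X = ∑ k ∈ range n, σ k := by
  obtain ⟨e, he⟩ := hσ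
  simp only [← Fin.sum_univ_eq_sum_range, he, nuclearNorm]
  exact (Equiv.sum_comp e _).symm

/-- Block `j` is the `0`-indexed `Ico (r*j) (r*(j+1))`: the paper's indices `rj+1, …, r(j+1)`. -/
theorem block_norm_sum_le_nuclear_general {m n r : ℕ}
    (X : Matrix (Fin m) (Fin n) ℂ) (σ : ℕ → ℝ)
    (hanti : Antitone σ) (hσ0 : ∀ k, 0 ≤ σ k)
    (hzero : ∀ k, n ≤ k → σ k = 0)
    (hσ : ∃ e : Equiv.Perm (Fin n), ∀ i : Fin n, σ (i : ℕ) = singVals X (e i)) :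
    ∀ J : ℕ,
      ∑ j ∈ Finset.Icc 1 J,
          Real.sqrt (∑ k ∈ Finset.Ico (r * j) (r * (j + 1)), σ k ^ 2)
        ≤ nuclearNorm X / Real.sqrt r := by
  intro J
  rcases r.eq_zero_or_pos with rfl | hr
  · simp
  rw [le_div_iff₀ (by positivity), mul_comm, nuclearNorm_eq_sum_range X hσ]
  exact (sqrt_mul_sum_sqrt_sum_sq_blocks_le hanti hσ0 r J).trans
    (sum_range_le_sum_range_of_eq_zero hσ0 hzero _)

/-- Grouping the decreasingly ordered singular values `σ` of `X` into consecutive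
blocks of size `r` (block `j ≥ 1` covers indices `rj+1, …, r(j+1)`, i.e. `0`-indexed
`Finset.Ico (r*j) (r*(j+1))`), with `c_j` the Frobenius norm of block `j`, we have
`Σ_{j ≥ 1} c_j ≤ ‖X‖_*/√r`. -/
theorem block_norm_sum_le_nuclear {m n r : ℕ} (hr : 1 ≤ r)
    (X : Matrix (Fin m) (Fin n) ℂ) (σ : ℕ → ℝ)
    (hanti : Antitone σ) (hσ0 : ∀ k, 0 ≤ σ k)
    (hzero : ∀ k, n ≤ k → σ k = 0)
    (hσ : ∃ e : Equiv.Perm (Fin n), ∀ i : Fin n, σ (i : ℕ) = singVals X (e i)) :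
    ∀ J : ℕ,
      ∑ j ∈ Finset.Icc 1 J,
          Real.sqrt (∑ k ∈ Finset.Ico (r * j) (r * (j + 1)), σ k ^ 2)
        ≤ nuclearNorm X / Real.sqrt r :=
  block_norm_sum_le_nuclear_general X σ hanti hσ0 hzero hσ
end

section
/- Let t ≥ 1, r ≥ t, and for j in an index set J with |J| = t let B_j ⊆ ℕ be nonempty disjoint finite sets with Σ_j |B_j| ≤ r, where J ⊆ ℤ₊ and each j ∈ J has B_j ≠ ∅. Then (1/t) Σ_{j∈J} ( 2^{j+1} Σ_{ℓ≥j, ℓ∈J} 2^{−ℓ} |B_ℓ| )^{1/2} ≤ 2√(r/t). -/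
/-!
By Cauchy–Schwarz (concavity of `√`), `Σⱼ √aⱼ ≤ √(t Σⱼ aⱼ)`, so it suffices to show `Σⱼ aⱼ ≤ 4r`.
Exchanging the two sums, the weight of `|B_ℓ|` in `Σⱼ aⱼ` is `Σ_{j ≤ ℓ} 2^(j+1-ℓ) < 4`, a geometric series, and `Σ_ℓ |B_ℓ| ≤ r`.
-/

open Finset

theorem Real.sum_sqrt_le_sqrt_card_mul_sum {ι : Type*} (s : Finset ι) {f : ι → ℝ}
    (hf : ∀ i ∈ s, 0 ≤ f i) : ∑ i ∈ s, √(f i) ≤ √(#s * ∑ i ∈ s, f i) := by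
  refine Real.le_sqrt_of_sq_le ?_
  calc (∑ i ∈ s, √(f i)) ^ 2 ≤ #s * ∑ i ∈ s, √(f i) ^ 2 := sq_sum_le_card_mul_sum_sq
    _ = #s * ∑ i ∈ s, f i := by
      rw [sum_congr rfl fun i hi => Real.sq_sqrt (hf i hi)]

theorem sum_two_pow_succ_filter_le (s : Finset ℕ) (ℓ : ℕ) :
    ∑ j ∈ s with j ≤ ℓ, (2 : ℝ) ^ (j + 1) ≤ 2 ^ (ℓ + 2) := by
  have hgeom : ∑ j ∈ s with j ≤ ℓ, 2 ^ j < 2 ^ (ℓ + 1) :=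
    Nat.geomSum_lt le_rfl fun j hj => Nat.lt_succ_of_le (mem_filter.1 hj).2
  have hgeom' : ∑ j ∈ s with j ≤ ℓ, (2 : ℝ) ^ j ≤ 2 ^ (ℓ + 1) := by
    exact_mod_cast hgeom.le
  calc ∑ j ∈ s with j ≤ ℓ, (2 : ℝ) ^ (j + 1) = 2 * ∑ j ∈ s with j ≤ ℓ, (2 : ℝ) ^ j := by
        rw [mul_sum]; exact sum_congr rfl fun j _ => pow_succ' 2 j
    _ ≤ 2 ^ (ℓ + 2) := by rw [pow_succ' 2 (ℓ + 1)]; gcongr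

theorem sum_two_pow_mul_sum_tail_le (J : Finset ℕ) {c : ℕ → ℝ} (hc : ∀ ℓ ∈ J, 0 ≤ c ℓ) :
    ∑ j ∈ J, (2 : ℝ) ^ (j + 1) * ∑ ℓ ∈ J with j ≤ ℓ, (2 : ℝ) ^ (-(ℓ : ℤ)) * c ℓ
      ≤ 4 * ∑ ℓ ∈ J, c ℓ := by
  have hswap : ∑ j ∈ J, (2 : ℝ) ^ (j + 1) * ∑ ℓ ∈ J with j ≤ ℓ, (2 : ℝ) ^ (-(ℓ : ℤ)) * c ℓ
      = ∑ ℓ ∈ J, (∑ j ∈ J with j ≤ ℓ, (2 : ℝ) ^ (j + 1)) * (2 : ℝ) ^ (-(ℓ : ℤ)) * c ℓ := by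
    simp_rw [mul_sum, sum_mul, mul_assoc]
    exact sum_comm' fun j ℓ => by simp only [mem_filter]; tauto
  rw [hswap, mul_sum]
  refine sum_le_sum fun ℓ hℓ => ?_
  have hcancel : (2 : ℝ) ^ (ℓ + 2) * (2 : ℝ) ^ (-(ℓ : ℤ)) = 4 := by
    rw [← zpow_natCast, ← zpow_add₀ two_ne_zero]; norm_num
  calc (∑ j ∈ J with j ≤ ℓ, (2 : ℝ) ^ (j + 1)) * (2 : ℝ) ^ (-(ℓ : ℤ)) * c ℓ
      ≤ (2 : ℝ) ^ (ℓ + 2) * (2 : ℝ) ^ (-(ℓ : ℤ)) * c ℓ := by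
        have := hc ℓ hℓ
        gcongr
        exact sum_two_pow_succ_filter_le J ℓ
    _ = 4 * c ℓ := by rw [hcancel]

theorem Real.one_div_mul_sqrt_mul_four {x : ℝ} (hx : 0 ≤ x) (y : ℝ) :
    1 / x * √(x * (4 * y)) = 2 * √(y / x) := by
  rcases hx.eq_or_lt with rfl | hx
  · simp
  rw [show x * (4 * y) = (2 * x) ^ 2 * (y / x) by field_simp; ring,
    Real.sqrt_mul (sq_nonneg _), Real.sqrt_sq (by positivity)]
  field_simp

theorem iteration_count_combinatorial_general (t r : ℕ)
    (J : Finset ℕ) (hJ : J.card = t)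
    (B : ℕ → Finset ℕ)
    (hsum : ∑ j ∈ J, (B j).card ≤ r) :
    (1 / (t : ℝ)) * ∑ j ∈ J,
        Real.sqrt ((2 : ℝ) ^ (j + 1) *
          ∑ ℓ ∈ J.filter (fun ℓ => j ≤ ℓ), (2 : ℝ) ^ (-(ℓ : ℤ)) * (B ℓ).card)
      ≤ 2 * Real.sqrt ((r : ℝ) / t) := by
  have hsum' : ∑ j ∈ J, ((B j).card : ℝ) ≤ r := by exact_mod_cast hsum
  have htotal := (sum_two_pow_mul_sum_tail_le J fun ℓ _ => (B ℓ).card.cast_nonneg).trans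
    (mul_le_mul_of_nonneg_left hsum' four_pos.le)
  rw [← Real.one_div_mul_sqrt_mul_four t.cast_nonneg]
  gcongr
  refine (Real.sum_sqrt_le_sqrt_card_mul_sum J fun j _ => by positivity).trans ?_
  rw [hJ]
  gcongr

open Finset in
/-- The combinatorial inequality in the iteration-count bound of ADMiRA:
for `t = |J|` nonempty pairwise disjoint bands `B_j`, `j ∈ J`, with
`Σ_j |B_j| ≤ r` and `1 ≤ t ≤ r`,
`(1/t) Σ_{j∈J} √(2^{j+1} Σ_{ℓ∈J, ℓ≥j} 2^{−ℓ} |B_ℓ|) ≤ 2 √(r/t)`. -/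
theorem iteration_count_combinatorial (t r : ℕ) (ht : 1 ≤ t) (htr : t ≤ r)
    (J : Finset ℕ) (hJ : J.card = t)
    (B : ℕ → Finset ℕ)
    (hne : ∀ j ∈ J, (B j).Nonempty)
    (hdisj : (J : Set ℕ).Pairwise fun a b => Disjoint (B a) (B b))
    (hsum : ∑ j ∈ J, (B j).card ≤ r) :
    (1 / (t : ℝ)) * ∑ j ∈ J,
        Real.sqrt ((2 : ℝ) ^ (j + 1) *
          ∑ ℓ ∈ J.filter (fun ℓ => j ≤ ℓ), (2 : ℝ) ^ (-(ℓ : ℤ)) * (B ℓ).card)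
      ≤ 2 * Real.sqrt ((r : ℝ) / t) :=
  iteration_count_combinatorial_general t r J hJ B hsum
end
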